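/- arXiv:1510.06721 — 2 statements merged into one kernel-verified Lean document; each statement's English description precedes it below -/
import Mathlib

section
/- Let a = (0,0,a_z) ∈ ℝ³ and T = diag(Tₓ, Tₓ, T_z) with a_z² = (2−p)(2p−1)/p, T_z = (1−p)²/p, Tₓ = 1−p for p ∈ [1/2, 1]. Then for every unit vector x̂ ∈ ℝ³, (a·x̂)² + 2‖T x̂‖ ≤ 1. -/
set_option maxHeartbeats 800000

open Matrix MeasureTheory
open scoped Kronecker
noncomputable section

/-- Pauli matrices -/
def σx : Matrix (Fin 2) (Fin 2) ℂ := !![0, 1; 1, 0]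
def σy : Matrix (Fin 2) (Fin 2) ℂ := !![0, -Complex.I; Complex.I, 0]
def σz : Matrix (Fin 2) (Fin 2) ℂ := !![1, 0; 0, -1]
def pauli : Fin 3 → Matrix (Fin 2) (Fin 2) ℂ := ![σx, σy, σz]
/-- v · σ -/
def dotσ (v : Fin 3 → ℝ) : Matrix (Fin 2) (Fin 2) ℂ := ∑ i, (v i : ℂ) • pauli i
/-- Euclidean dot product on ℝ³ -/
def dot3 (u v : Fin 3 → ℝ) : ℝ := ∑ i, u i * v i
/-- Euclidean norm on ℝ³ -/
def norm3 (v : Fin 3 → ℝ) : ℝ := Real.sqrt (∑ i, (v i) ^ 2)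
/-- partial trace over Alice (first factor) -/
def trA (M : Matrix (Fin 2 × Fin 2) (Fin 2 × Fin 2) ℂ) : Matrix (Fin 2) (Fin 2) ℂ :=
  fun i j => ∑ a, M (a, i) (a, j)

/-- the canonical data on the boundary curve satisfy the criterion. -/
theorem boundary_satisfies_criterion (p : ℝ) (hp : p ∈ Set.Icc (1/2 : ℝ) 1) :
    let a : Fin 3 → ℝ := ![0, 0, Real.sqrt ((2 - p) * (2 * p - 1) / p)]
    let T : Fin 3 → ℝ := ![1 - p, 1 - p, (1 - p) ^ 2 / p]
    ∀ x : Fin 3 → ℝ, norm3 x = 1 →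
      (dot3 a x) ^ 2 + 2 * norm3 (fun i => T i * x i) ≤ 1 := by
  intro a T x hx
  obtain ⟨hp1, hp2⟩ := hp
  have hp0 : 0 < p := lt_of_lt_of_le (by norm_num) hp1
  have hsum : x 0 ^ 2 + x 1 ^ 2 + x 2 ^ 2 = 1 := by
    unfold norm3 at hx
    rw [Fin.sum_univ_three] at hx
    exact Real.sqrt_eq_one.mp hx
  set c := x 2 ^ 2 with hc
  have hc0 : 0 ≤ c := sq_nonneg _
  have hc1 : c ≤ 1 := by nlinarith [sq_nonneg (x 0), sq_nonneg (x 1)]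
  set q := (2 - p) * (2 * p - 1) / p with hqdef
  have hq : 0 ≤ q := by
    apply div_nonneg _ hp0.le
    nlinarith
  have hdot : (dot3 a x) ^ 2 = q * c := by
    have hd : dot3 a x = Real.sqrt q * x 2 := by
      simp [dot3, a, Fin.sum_univ_three, hqdef]
    rw [hd, mul_pow, Real.sq_sqrt hq]
  have hR : 0 ≤ (1 - q * c) / 2 := by
    have : q * c ≤ q := by nlinarith
    have hq1 : q ≤ 1 := by
      rw [hqdef, div_le_one hp0]
      nlinarith
    nlinarith
  have hE : ((1 - p) * x 0) ^ 2 + ((1 - p) * x 1) ^ 2 + ((1 - p) ^ 2 / p * x 2) ^ 2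
      ≤ ((1 - q * c) / 2) ^ 2 := by
    have h1 : 0 ≤ (1 - p) ^ 3 * (2 * p - 1) * (1 - c) := by
      apply mul_nonneg (mul_nonneg (pow_nonneg (by linarith) 3) (by linarith)) (by linarith)
    have h2 : 0 ≤ (2 - p) ^ 2 * (2 * p - 1) ^ 2 * (1 - c) ^ 2 := by positivity
    have hs : x 0 ^ 2 + x 1 ^ 2 = 1 - c := by nlinarith
    have hpLHS : p ^ 2 * (((1 - p) * x 0) ^ 2 + ((1 - p) * x 1) ^ 2
        + ((1 - p) ^ 2 / p * x 2) ^ 2)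
        = p ^ 2 * (1 - p) ^ 2 * (1 - c) + (1 - p) ^ 4 * c := by
      have hx2 : x 2 ^ 2 = c := hc.symm
      field_simp
      linear_combination p ^ 2 * (1 - p) ^ 2 * hs + (1 - p) ^ 4 * hx2
    have key : 4 * (p ^ 2 * (1 - p) ^ 2 * (1 - c) + (1 - p) ^ 4 * c)
        ≤ (p - (2 - p) * (2 * p - 1) * c) ^ 2 := by linarith [h1, h2]
    have heq : ((1 - q * c) / 2) ^ 2
        = (p - (2 - p) * (2 * p - 1) * c) ^ 2 / (4 * p ^ 2) := by
      rw [hqdef]; field_simp; ring_nf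
    rw [heq, le_div_iff₀ (by positivity)]
    nlinarith [key, hpLHS]
  have hnorm : norm3 (fun i => T i * x i) ≤ (1 - q * c) / 2 := by
    unfold norm3
    rw [Fin.sum_univ_three]
    simp only [T, Matrix.cons_val_zero, Matrix.cons_val_one, Matrix.head_cons]
    calc Real.sqrt (((1 - p) * x 0) ^ 2 + ((1 - p) * x 1) ^ 2 + ((1 - p) ^ 2 / p * x 2) ^ 2)
        ≤ Real.sqrt (((1 - q * c) / 2) ^ 2) := Real.sqrt_le_sqrt hE
      _ = (1 - q * c) / 2 := Real.sqrt_sq hR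
  rw [hdot]
  linarith
end
end

section
/- Define F(θ) = a_z² cos²θ + 2√(Tₓ² + cos²θ(T_z² − Tₓ²)) for real constants a_z, Tₓ, T_z with Tₓ ≠ 0. If either Tₓ²/(Tₓ²−T_z²) < (Tₓ²−T_z²)/a_z⁴ or T_z²/(Tₓ²−T_z²) > (Tₓ²−T_z²)/a_z⁴ (assuming Tₓ² ≠ T_z², a_z ≠ 0), then max over θ ∈ [0,π] of F(θ) equals max{a_z² + 2|T_z|, 2|Tₓ|}. -/
open Matrix MeasureTheory
open scoped Kronecker
noncomputable section

/-- under either no-interior-critical-point condition, the maximum of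
    F(θ) = a_z²cos²θ + 2√(Tₓ² + cos²θ(T_z²−Tₓ²)) over [0,π] is max{a_z²+2|T_z|, 2|Tₓ|}. -/
theorem max_of_F (az Tx Tz : ℝ) (haz : az ≠ 0) (hTx : Tx ≠ 0) (hne : Tx ^ 2 ≠ Tz ^ 2)
    (hcond : Tx ^ 2 / (Tx ^ 2 - Tz ^ 2) < (Tx ^ 2 - Tz ^ 2) / az ^ 4 ∨
             Tz ^ 2 / (Tx ^ 2 - Tz ^ 2) > (Tx ^ 2 - Tz ^ 2) / az ^ 4) :
    IsGreatest
      ((fun θ : ℝ => az ^ 2 * Real.cos θ ^ 2 +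
          2 * Real.sqrt (Tx ^ 2 + Real.cos θ ^ 2 * (Tz ^ 2 - Tx ^ 2))) '' Set.Icc 0 Real.pi)
      (max (az ^ 2 + 2 * |Tz|) (2 * |Tx|)) := by
  have hπ : (0:ℝ) ≤ Real.pi := Real.pi_pos.le
  constructor
  · -- membership: the max is attained at θ = 0 or θ = π/2
    rcases le_total (az ^ 2 + 2 * |Tz|) (2 * |Tx|) with h | h
    · rw [max_eq_right h]
      refine ⟨Real.pi / 2, ⟨by positivity, by linarith [Real.pi_pos]⟩, ?_⟩
      simp [Real.cos_pi_div_two, Real.sqrt_sq_eq_abs]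
    · rw [max_eq_left h]
      refine ⟨0, ⟨le_refl 0, hπ⟩, ?_⟩
      have h1 : Tx ^ 2 + Real.cos 0 ^ 2 * (Tz ^ 2 - Tx ^ 2) = Tz ^ 2 := by
        simp [Real.cos_zero]
      simp only [Real.cos_zero, one_pow, mul_one, one_mul]
      rw [show Tx ^ 2 + (Tz ^ 2 - Tx ^ 2) = Tz ^ 2 by ring, Real.sqrt_sq_eq_abs]
  · rintro x ⟨θ, hθ, rfl⟩
    set t := Real.cos θ ^ 2 with ht
    have ht0 : 0 ≤ t := sq_nonneg _
    have ht1 : t ≤ 1 := by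
      have h1 := Real.neg_one_le_cos θ
      have h2 := Real.cos_le_one θ
      nlinarith
    have haz2 : (0:ℝ) < az ^ 2 := by positivity
    have hTxa : (0:ℝ) < |Tx| := abs_pos.mpr hTx
    simp only
    rcases lt_or_gt_of_ne hne with hlt | hgt
    · -- Tx² < Tz² : F increasing, bound by az² + 2|Tz|
      have h1 : az ^ 2 * t ≤ az ^ 2 := by nlinarith
      have h2 : Real.sqrt (Tx ^ 2 + t * (Tz ^ 2 - Tx ^ 2)) ≤ |Tz| := by
        rw [← Real.sqrt_sq_eq_abs]
        apply Real.sqrt_le_sqrt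
        nlinarith
      calc az ^ 2 * t + 2 * Real.sqrt (Tx ^ 2 + t * (Tz ^ 2 - Tx ^ 2))
          ≤ az ^ 2 + 2 * |Tz| := by linarith
        _ ≤ _ := le_max_left _ _
    · -- Tz² < Tx²
      have hDpos : 0 < Tx ^ 2 - Tz ^ 2 := by linarith
      have haz4 : (0:ℝ) < az ^ 4 := by positivity
      rcases hcond with h | h
      · -- az⁴ Tx² < D², so D > az²|Tx|; bound by 2|Tx|
        rw [div_lt_div_iff₀ hDpos haz4] at h
        have hkey : az ^ 2 * |Tx| < Tx ^ 2 - Tz ^ 2 :=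
          lt_of_pow_lt_pow_left₀ 2 hDpos.le (by nlinarith [sq_abs Tx])
        have hy : 0 ≤ |Tx| - az ^ 2 * t / 2 := by nlinarith [sq_abs Tx, sq_nonneg Tz]
        have h2 : Real.sqrt (Tx ^ 2 + t * (Tz ^ 2 - Tx ^ 2)) ≤ |Tx| - az ^ 2 * t / 2 := by
          calc Real.sqrt (Tx ^ 2 + t * (Tz ^ 2 - Tx ^ 2))
              ≤ Real.sqrt ((|Tx| - az ^ 2 * t / 2) ^ 2) := by
                apply Real.sqrt_le_sqrt
                nlinarith [sq_abs Tx, mul_nonneg ht0 (sub_nonneg.mpr hkey.le),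
                  sq_nonneg (az ^ 2 * t)]
            _ = |Tx| - az ^ 2 * t / 2 := Real.sqrt_sq hy
        calc az ^ 2 * t + 2 * Real.sqrt (Tx ^ 2 + t * (Tz ^ 2 - Tx ^ 2))
            ≤ 2 * |Tx| := by linarith
          _ ≤ _ := le_max_right _ _
      · -- az⁴ Tz² > D², so D < az²|Tz|; bound by az² + 2|Tz|
        rw [gt_iff_lt, div_lt_div_iff₀ haz4 hDpos] at h
        have hkey : Tx ^ 2 - Tz ^ 2 < az ^ 2 * |Tz| :=
          lt_of_pow_lt_pow_left₀ 2 (by positivity) (by nlinarith [sq_abs Tz])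
        have hy : 0 ≤ |Tz| + az ^ 2 * (1 - t) / 2 := by
          have := abs_nonneg Tz; nlinarith
        have h2 : Real.sqrt (Tx ^ 2 + t * (Tz ^ 2 - Tx ^ 2)) ≤ |Tz| + az ^ 2 * (1 - t) / 2 := by
          calc Real.sqrt (Tx ^ 2 + t * (Tz ^ 2 - Tx ^ 2))
              ≤ Real.sqrt ((|Tz| + az ^ 2 * (1 - t) / 2) ^ 2) := by
                apply Real.sqrt_le_sqrt
                nlinarith [sq_abs Tz, mul_nonneg (by linarith : (0:ℝ) ≤ 1 - t)
                  (sub_nonneg.mpr hkey.le), sq_nonneg (az ^ 2 * (1 - t))]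
            _ = |Tz| + az ^ 2 * (1 - t) / 2 := Real.sqrt_sq hy
        calc az ^ 2 * t + 2 * Real.sqrt (Tx ^ 2 + t * (Tz ^ 2 - Tx ^ 2))
            ≤ az ^ 2 + 2 * |Tz| := by linarith
          _ ≤ _ := le_max_left _ _
end
end
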